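/- arXiv:2105.01880 — 2 statements merged into one kernel-verified Lean document; each statement's English description precedes it below -/
import Mathlib

section
/- For all n ≥ 0, the Hankel determinant of the Bernoulli numbers satisfies Hₙ(Bₖ) = (−1)^{n(n+1)/2} · ∏_{ℓ=1}^n ( ℓ⁴ / (4(2ℓ+1)(2ℓ−1)) )^{n+1−ℓ}. -/
/-!
Write `B[q]` for the functional `tᵏ ↦ Bₖ` and substitute `x = 2t + 1`, i.e. consider
`L[p] = B[p(2t + 1)]`. The triangular change of basis `tⁱ ↦ (2t + 1)ⁱ` turns the Hankel matrix of
the `Bₖ` into that of the moments `L[xᵏ]` and multiplies its determinant by `∏ (2ⁱ)²`.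
Since `∑_{k<n} C(n,k) Bₖ = [n = 1]`, we have `B[q(t + 1)] = B[q] + q'(0)`, i.e.
`L[p(x + 2)] = L[p] + 2 p'(1)`, which makes the difference operator
`(x+1)² p(x+2) + (x-1)² p(x-2) - ((x+1)² + (x-1)²) p` symmetric for `L`. The monic polynomials
with `x Pₙ = Pₙ₊₁ + βₙ Pₙ₋₁`, `βₙ = -n⁴ / ((2n+1)(2n-1))`, are its eigenvectors for the distinct
eigenvalues `4n(n+1)`, hence orthogonal for `L`, and a Hankel determinant of moments is the
product `∏_{k ≤ n} β₁ ⋯ βₖ` of the squared norms of the monic orthogonal polynomials.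
-/

/-- The Hankel determinant `Hₙ(c) = det (c_{i+j})_{0 ≤ i,j ≤ n}`. -/
def hankel (c : ℕ → ℚ) (n : ℕ) : ℚ :=
  Matrix.det (Matrix.of fun i j : Fin (n + 1) => c (i.1 + j.1))

open Polynomial hiding bernoulli
open Finset

theorem Finset.prod_range_prod_Icc_eq_prod_pow {M : Type*} [CommMonoid M] (f : ℕ → M) (n : ℕ) :
    ∏ k ∈ range (n + 1), ∏ ℓ ∈ Icc 1 k, f ℓ = ∏ ℓ ∈ Icc 1 n, f ℓ ^ (n + 1 - ℓ) := by
  induction n with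
  | zero => simp
  | succ n ih =>
    rw [prod_range_succ, ih, prod_Icc_succ_top (by omega), prod_Icc_succ_top (by omega),
      Nat.add_sub_cancel_left, pow_one, ← mul_assoc, ← prod_mul_distrib]
    congr 1
    refine prod_congr rfl fun ℓ hℓ => ?_
    rw [← pow_succ, show n + 1 + 1 - ℓ = n + 1 - ℓ + 1 by simp at hℓ; omega]

namespace Polynomial

variable {R : Type*} [CommRing R]

noncomputable def momentFunctional (w : ℕ → R) : R[X] →ₗ[R] R :=
  lsum fun k => w k • LinearMap.id

theorem momentFunctional_monomial (w : ℕ → R) (k : ℕ) (a : R) :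
    momentFunctional w (monomial k a) = w k * a := by
  simp [momentFunctional]

theorem momentFunctional_X_pow (w : ℕ → R) (k : ℕ) : momentFunctional w (X ^ k) = w k := by
  rw [← monomial_one_right_eq_X_pow, momentFunctional_monomial, mul_one]

theorem map_C_mul (φ : R[X] →ₗ[R] R) (a : R) (p : R[X]) : φ (C a * p) = a * φ p := by
  rw [← smul_eq_C_mul, map_smul, smul_eq_mul]

section ThreeTermRecurrence

variable (b : ℕ → R)

noncomputable def threeTermPoly : ℕ → R[X]
  | 0 => 1
  | 1 => X
  | n + 2 => X * threeTermPoly (n + 1) - C (b (n + 1)) * threeTermPoly n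

variable {b}

theorem threeTermPoly_add_two (n : ℕ) :
    threeTermPoly b (n + 2) = X * threeTermPoly b (n + 1) - C (b (n + 1)) * threeTermPoly b n :=
  rfl

theorem X_mul_threeTermPoly_succ (n : ℕ) :
    X * threeTermPoly b (n + 1) = threeTermPoly b (n + 2) + C (b (n + 1)) * threeTermPoly b n := by
  rw [threeTermPoly_add_two]
  ring

theorem natDegree_threeTermPoly_le (n : ℕ) : (threeTermPoly b n).natDegree ≤ n := by
  induction n using Nat.twoStepInduction with
  | zero => simp [threeTermPoly]
  | one => exact natDegree_X_le
  | more n _ h₁ =>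
    rw [threeTermPoly_add_two]
    refine (natDegree_sub_le _ _).trans (max_le ?_ ?_)
    · exact (natDegree_mul_le.trans (add_le_add natDegree_X_le h₁)).trans_eq (by ring)
    · exact (natDegree_C_mul_le _ _).trans (by omega)

theorem coeff_threeTermPoly_self (n : ℕ) : (threeTermPoly b n).coeff n = 1 := by
  induction n using Nat.twoStepInduction with
  | zero => simp [threeTermPoly]
  | one => simp [threeTermPoly]
  | more n _ h₁ =>
    rw [threeTermPoly_add_two, coeff_sub, coeff_X_mul, h₁, coeff_C_mul,
      coeff_eq_zero_of_natDegree_lt ((natDegree_threeTermPoly_le n).trans_lt (by omega))]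
    ring

theorem map_threeTermPoly_mul_self_succ {φ : R[X] →ₗ[R] R}
    (horth : ∀ i j, i ≠ j → φ (threeTermPoly b i * threeTermPoly b j) = 0) (n : ℕ) :
    φ (threeTermPoly b (n + 1) * threeTermPoly b (n + 1))
      = b (n + 1) * φ (threeTermPoly b n * threeTermPoly b n) := by
  have hleft : φ (threeTermPoly b (n + 1) * (X * threeTermPoly b n))
      = φ (threeTermPoly b (n + 1) * threeTermPoly b (n + 1)) := by
    cases n with
    | zero => simp [threeTermPoly]
    | succ n =>
      rw [X_mul_threeTermPoly_succ, mul_add, map_add, mul_left_comm, map_C_mul,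
        horth (n + 2) n (by omega), mul_zero, add_zero]
  have hright : φ (threeTermPoly b n * (X * threeTermPoly b (n + 1)))
      = b (n + 1) * φ (threeTermPoly b n * threeTermPoly b n) := by
    rw [X_mul_threeTermPoly_succ, mul_add, map_add, mul_left_comm, map_C_mul,
      horth n (n + 2) (by omega), zero_add]
  rw [← hleft, ← hright]
  congr 1
  ring

theorem map_threeTermPoly_mul_self {φ : R[X] →ₗ[R] R}
    (horth : ∀ i j, i ≠ j → φ (threeTermPoly b i * threeTermPoly b j) = 0) (n : ℕ) :
    φ (threeTermPoly b n * threeTermPoly b n) = φ 1 * ∏ ℓ ∈ Icc 1 n, b ℓ := by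
  induction n with
  | zero => simp [threeTermPoly]
  | succ n ih =>
    rw [map_threeTermPoly_mul_self_succ horth, ih, prod_Icc_succ_top (by omega)]
    ring

end ThreeTermRecurrence

theorem map_mul_eq_zero_of_eigenvalue_ne [NoZeroDivisors R] {φ : R[X] →ₗ[R] R} {T : R[X] → R[X]}
    (hT : ∀ p q, φ (T p * q) = φ (p * T q)) {p q : R[X]} {a b : R}
    (hp : T p = C a * p) (hq : T q = C b * q) (hab : a ≠ b) : φ (p * q) = 0 := by
  have h : a * φ (p * q) = b * φ (p * q) := by
    rw [← map_C_mul, ← map_C_mul, ← mul_assoc, ← hp, hT, hq, mul_left_comm]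
  by_contra hne
  exact hab (mul_right_cancel₀ hne h)

theorem det_gram_eq_mul_det_moments (φ : R[X] →ₗ[R] R) (Q : ℕ → R[X])
    (hQ : ∀ i, (Q i).natDegree ≤ i) (n : ℕ) :
    (Matrix.of fun i j : Fin (n + 1) => φ (Q i * Q j)).det
      = (∏ i : Fin (n + 1), (Q i).coeff i) ^ 2
        * (Matrix.of fun i j : Fin (n + 1) => φ (X ^ (i.1 + j.1))).det := by
  set V : Matrix (Fin (n + 1)) (Fin (n + 1)) R := Matrix.of fun i j => (Q i).coeff j
  have hV : V.det = ∏ i : Fin (n + 1), (Q i).coeff i :=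
    Matrix.det_of_isLowerTriangular V fun i j hij =>
      coeff_eq_zero_of_natDegree_lt ((hQ i).trans_lt hij)
  have hgram : (Matrix.of fun i j : Fin (n + 1) => φ (Q i * Q j))
      = V * (Matrix.of fun i j : Fin (n + 1) => φ (X ^ (i.1 + j.1))) * V.transpose := by
    have hexpand (i : Fin (n + 1)) : Q i = ∑ k : Fin (n + 1), C ((Q i).coeff k) * X ^ (k : ℕ) := by
      rw [Fin.sum_univ_eq_sum_range (fun k => C ((Q i).coeff k) * X ^ k)]
      exact as_sum_range_C_mul_X_pow' _ ((hQ i).trans_lt i.2)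
    ext i j
    rw [Matrix.of_apply, hexpand i, hexpand j, Finset.sum_mul_sum, Finset.sum_comm]
    simp only [Matrix.mul_apply, Matrix.transpose_apply, Matrix.of_apply, V, map_sum,
      Finset.sum_mul]
    refine Finset.sum_congr rfl fun l _ => Finset.sum_congr rfl fun k _ => ?_
    rw [mul_mul_mul_comm, ← C_mul, pow_add, ← smul_eq_C_mul, map_smul, smul_eq_mul]
    ring
  rw [hgram, Matrix.det_mul, Matrix.det_mul, Matrix.det_transpose, hV]
  ring

end Polynomial

theorem momentFunctional_bernoulli_comp_X_add_one (q : ℚ[X]) :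
    momentFunctional bernoulli (q.comp (X + 1))
      = momentFunctional bernoulli q + q.derivative.eval 0 := by
  induction q using Polynomial.induction_on' with
  | add p q hp hq => simp only [add_comp, map_add, eval_add, hp, hq]; ring
  | monomial n a =>
    have hsum : momentFunctional bernoulli ((X + 1 : ℚ[X]) ^ n)
        = bernoulli n + if n = 1 then 1 else 0 := by
      have hterm (k : ℕ) : momentFunctional bernoulli (X ^ k * 1 ^ (n - k) * (n.choose k : ℚ[X]))
          = n.choose k * bernoulli k := by
        rw [one_pow, mul_one, ← C_eq_natCast, mul_comm, map_C_mul, momentFunctional_X_pow]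
      rw [add_pow, map_sum, sum_range_succ, ← _root_.sum_bernoulli n,
        sum_congr rfl fun k _ => hterm k, hterm, Nat.choose_self, Nat.cast_one, one_mul, add_comm]
    have hderiv : (monomial n a).derivative.eval 0 = a * if n = 1 then 1 else 0 := by
      rcases n with _ | _ | n <;> simp
    rw [monomial_comp, map_C_mul, hsum, momentFunctional_monomial, hderiv]
    ring

noncomputable def centeredBernoulli : ℚ[X] →ₗ[ℚ] ℚ :=
  momentFunctional bernoulli ∘ₗ (aeval (2 * X + 1 : ℚ[X])).toLinearMap

theorem centeredBernoulli_apply (p : ℚ[X]) :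
    centeredBernoulli p = momentFunctional bernoulli (p.comp (2 * X + 1)) :=
  rfl

theorem centeredBernoulli_comp_X_add_two (p : ℚ[X]) :
    centeredBernoulli (p.comp (X + 2)) = centeredBernoulli p + 2 * p.derivative.eval 1 := by
  have hcomp : (p.comp (X + 2)).comp (2 * X + 1) = (p.comp (2 * X + 1)).comp (X + 1) := by
    rw [comp_assoc, comp_assoc]
    congr 1
    simp only [add_comp, mul_comp, X_comp, ofNat_comp, one_comp]
    ring
  rw [centeredBernoulli_apply, hcomp, momentFunctional_bernoulli_comp_X_add_one,
    ← centeredBernoulli_apply, derivative_comp]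
  simp only [eval_mul, eval_comp, derivative_add, derivative_mul, derivative_X,
    derivative_ofNat, derivative_one, eval_add, eval_X, eval_ofNat, eval_one, eval_zero]
  norm_num

noncomputable def secondDiff (p : ℚ[X]) : ℚ[X] :=
  (X + 1) ^ 2 * p.comp (X + 2) + (X - 1) ^ 2 * p.comp (X - 2) - ((X + 1) ^ 2 + (X - 1) ^ 2) * p

noncomputable def skewDiff (p : ℚ[X]) : ℚ[X] :=
  (X + 1) ^ 2 * p.comp (X + 2) - (X - 1) ^ 2 * p.comp (X - 2)

theorem secondDiff_sub (p q : ℚ[X]) : secondDiff (p - q) = secondDiff p - secondDiff q := by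
  simp only [secondDiff, sub_comp]; ring

theorem secondDiff_C_mul (a : ℚ) (p : ℚ[X]) : secondDiff (C a * p) = C a * secondDiff p := by
  simp only [secondDiff, mul_comp, C_comp]; ring

theorem secondDiff_X_mul (p : ℚ[X]) : secondDiff (X * p) = X * secondDiff p + 2 * skewDiff p := by
  simp only [secondDiff, skewDiff, mul_comp, X_comp]; ring

theorem skewDiff_sub (p q : ℚ[X]) : skewDiff (p - q) = skewDiff p - skewDiff q := by
  simp only [skewDiff, sub_comp]; ring

theorem skewDiff_C_mul (a : ℚ) (p : ℚ[X]) : skewDiff (C a * p) = C a * skewDiff p := by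
  simp only [skewDiff, mul_comp, C_comp]; ring

theorem skewDiff_X_mul (p : ℚ[X]) :
    skewDiff (X * p) = X * skewDiff p + 2 * secondDiff p + 2 * ((X + 1) ^ 2 + (X - 1) ^ 2) * p := by
  simp only [secondDiff, skewDiff, mul_comp, X_comp]; ring

-- `secondDiff p * q - p * secondDiff q = G.comp (X + 2) - G` for a `G` with a double root at `1`,
-- and `centeredBernoulli_comp_X_add_two` makes the functional invariant under such a difference.
theorem centeredBernoulli_secondDiff_mul (p q : ℚ[X]) :
    centeredBernoulli (secondDiff p * q) = centeredBernoulli (p * secondDiff q) := by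
  have hinv : ∀ r : ℚ[X], (r.comp (X - 2)).comp (X + 2) = r := fun r => by
    rw [comp_assoc, sub_comp, X_comp, ofNat_comp]; norm_num
  set G : ℚ[X] := (X - 1) ^ 2 * (p * q.comp (X - 2) - p.comp (X - 2) * q)
  have hG : secondDiff p * q - p * secondDiff q = G.comp (X + 2) - G := by
    simp only [G, secondDiff, mul_comp, sub_comp, pow_comp, X_comp, one_comp, hinv]
    ring
  have hG' : G.derivative.eval 1 = 0 := by
    simp [G, derivative_mul, derivative_pow]
  rw [← sub_eq_zero, ← map_sub, hG, map_sub, centeredBernoulli_comp_X_add_two, hG']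
  ring

section BernoulliOrthogonalPolynomials

noncomputable def bernoulliJacobiCoeff (ℓ : ℕ) : ℚ :=
  -(ℓ : ℚ) ^ 4 / ((2 * ℓ + 1) * (2 * ℓ - 1))

local notation "β" => bernoulliJacobiCoeff
-- The monic orthogonal polynomials of `centeredBernoulli`.
local notation "P" => threeTermPoly bernoulliJacobiCoeff

theorem X_mul_bernoulliOrthPoly (n : ℕ) : X * P n = P (n + 1) + C (β n) * P (n - 1) := by
  cases n with
  | zero => simp [threeTermPoly, bernoulliJacobiCoeff]
  | succ n => exact X_mul_threeTermPoly_succ n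

-- The identity that determines `β`: it is the coefficient of `P (n + 1)` in the induction step
-- for `skewDiff` below.
theorem bernoulliJacobiCoeff_recurrence (n : ℕ) :
    8 * ((n : ℚ) + 1) ^ 2 + 8 * (n + 1) + 4 + (8 * n + 20) * β (n + 2) - (8 * n + 4) * β (n + 1)
      = 0 := by
  have h₁ : (2 * (n : ℚ) + 1) ≠ 0 := by positivity
  have h₃ : (2 * (n : ℚ) + 3) ≠ 0 := by positivity
  have h₅ : (2 * (n : ℚ) + 5) ≠ 0 := by positivity
  simp only [bernoulliJacobiCoeff]
  push_cast
  rw [show 2 * ((n : ℚ) + 1) - 1 = 2 * n + 1 by ring,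
    show 2 * ((n : ℚ) + 1) + 1 = 2 * n + 3 by ring, show 2 * ((n : ℚ) + 2) - 1 = 2 * n + 3 by ring,
    show 2 * ((n : ℚ) + 2) + 1 = 2 * n + 5 by ring]
  field_simp
  ring

-- The `skewDiff` identity is only there to make the induction go through.
theorem secondDiff_bernoulliOrthPoly_and_skewDiff (n : ℕ) :
    secondDiff (P n) = C (4 * (n : ℚ) * (n + 1)) * P n ∧
      skewDiff (P n)
        = C (4 * ((n : ℚ) + 1)) * (X * P n) - C ((8 * (n : ℚ) + 4) * β n) * P (n - 1) := by
  induction n using Nat.twoStepInduction with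
  | zero | one =>
    constructor <;>
      norm_num [threeTermPoly, secondDiff, skewDiff, bernoulliJacobiCoeff, map_ofNat] <;> ring
  | more n h₀ h₁ =>
    obtain ⟨hT₀, hS₀⟩ := h₀
    obtain ⟨hT₁, hS₁⟩ := h₁
    have hβ := congrArg C (bernoulliJacobiCoeff_recurrence n)
    simp only [Nat.add_sub_cancel] at hS₁
    push_cast at hT₀ hS₀ hT₁ hS₁ ⊢
    simp only [map_add, map_sub, map_mul, map_ofNat, map_natCast, map_pow, map_one, map_zero]
      at hT₀ hS₀ hT₁ hS₁ hβ ⊢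
    constructor
    · rw [threeTermPoly_add_two, secondDiff_sub, secondDiff_C_mul, secondDiff_X_mul, hT₁, hT₀, hS₁]
      ring
    · rw [threeTermPoly_add_two, skewDiff_sub, skewDiff_C_mul, skewDiff_X_mul, hT₁, hS₁, hS₀]
      linear_combination (-((8 * (n : ℚ[X]) + 4) * C (β (n + 1)))) * X_mul_bernoulliOrthPoly n
        + P (n + 1) * hβ

theorem bernoulliJacobiCoeff_eq_neg_four_mul (ℓ : ℕ) :
    β ℓ = -4 * ((ℓ : ℚ) ^ 4 / (4 * (2 * (ℓ : ℚ) + 1) * (2 * (ℓ : ℚ) - 1))) := by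
  rw [bernoulliJacobiCoeff, mul_assoc 4, ← div_div _ 4]
  ring

theorem centeredBernoulli_one : centeredBernoulli 1 = 1 := by
  rw [centeredBernoulli_apply, one_comp, ← pow_zero X, momentFunctional_X_pow,
    _root_.bernoulli_zero]

theorem centeredBernoulli_bernoulliOrthPoly_mul {i j : ℕ} (hij : i ≠ j) :
    centeredBernoulli (P i * P j) = 0 := by
  have hmono : StrictMono fun n : ℕ => 4 * (n : ℚ) * (n + 1) := fun m k h => by
    have : (m : ℚ) < k := by exact_mod_cast h
    nlinarith [(Nat.cast_nonneg m : (0 : ℚ) ≤ m)]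
  exact map_mul_eq_zero_of_eigenvalue_ne centeredBernoulli_secondDiff_mul
    (secondDiff_bernoulliOrthPoly_and_skewDiff i).1 (secondDiff_bernoulliOrthPoly_and_skewDiff j).1
    (hmono.injective.ne hij)

theorem centeredBernoulli_bernoulliOrthPoly_mul_self (n : ℕ) :
    centeredBernoulli (P n * P n) = ∏ ℓ ∈ Icc 1 n, β ℓ := by
  rw [map_threeTermPoly_mul_self (fun _ _ => centeredBernoulli_bernoulliOrthPoly_mul),
    centeredBernoulli_one, one_mul]

theorem prod_pow_two_sq_mul_hankel_bernoulli (n : ℕ) :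
    (∏ i ∈ range (n + 1), (2 : ℚ) ^ i) ^ 2 * hankel (fun k => bernoulli k) n
      = ∏ i ∈ range (n + 1), ∏ ℓ ∈ Icc 1 i, β ℓ := by
  have hdeg (i : ℕ) : ((2 * X + 1 : ℚ[X]) ^ i).natDegree ≤ i := by compute_degree
  have hlead (i : ℕ) : ((2 * X + 1 : ℚ[X]) ^ i).coeff i = 2 ^ i := by
    simpa [coeff_X, coeff_one] using coeff_pow_of_natDegree_le (m := i) (hdeg 1)
  have hB := det_gram_eq_mul_det_moments (momentFunctional bernoulli) _ hdeg n
  have hP := det_gram_eq_mul_det_moments centeredBernoulli _ (natDegree_threeTermPoly_le (b := β)) n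
  have hmoments : (Matrix.of fun i j : Fin (n + 1) =>
        momentFunctional bernoulli ((2 * X + 1) ^ (i : ℕ) * (2 * X + 1) ^ (j : ℕ)))
      = Matrix.of fun i j : Fin (n + 1) => centeredBernoulli (X ^ (i.1 + j.1)) := by
    ext i j
    rw [Matrix.of_apply, Matrix.of_apply, centeredBernoulli_apply, X_pow_comp, pow_add]
  simp only [hmoments, hlead, momentFunctional_X_pow] at hB
  simp only [coeff_threeTermPoly_self, prod_const_one, one_pow, one_mul] at hP
  have hdiag : (Matrix.of fun i j : Fin (n + 1) => centeredBernoulli (P i * P j))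
      = Matrix.diagonal fun i : Fin (n + 1) => ∏ ℓ ∈ Icc 1 (i : ℕ), β ℓ := by
    ext i j
    rcases eq_or_ne i j with rfl | hij
    · simp [centeredBernoulli_bernoulliOrthPoly_mul_self]
    · simp [hij, centeredBernoulli_bernoulliOrthPoly_mul (Fin.val_injective.ne hij)]
  rw [← Fin.prod_univ_eq_prod_range, ← Fin.prod_univ_eq_prod_range (fun i => ∏ ℓ ∈ Icc 1 i, β ℓ),
    hankel, ← hB, ← hP, hdiag, Matrix.det_diagonal]

end BernoulliOrthogonalPolynomials

theorem hankel_bernoulli (n : ℕ) :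
    hankel (fun k => bernoulli k) n
      = (-1) ^ (n * (n + 1) / 2)
      * ∏ ℓ ∈ Finset.Icc 1 n,
          ((ℓ : ℚ) ^ 4 / (4 * (2 * (ℓ : ℚ) + 1) * (2 * (ℓ : ℚ) - 1))) ^ (n + 1 - ℓ) := by
  have hsum : ∑ i ∈ range (n + 1), i = n * (n + 1) / 2 := by
    rw [sum_range_id, Nat.add_sub_cancel, mul_comm]
  have key := prod_pow_two_sq_mul_hankel_bernoulli n
  simp only [bernoulliJacobiCoeff_eq_neg_four_mul, prod_mul_distrib, prod_const, Nat.card_Icc,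
    Nat.add_sub_cancel, prod_range_prod_Icc_eq_prod_pow] at key
  rw [prod_pow_eq_pow_sum (range (n + 1)) (fun i => i),
    prod_pow_eq_pow_sum (range (n + 1)) (fun i => i), hsum,
    show (-4 : ℚ) = 2 ^ 2 * -1 by norm_num, mul_pow, ← pow_mul, pow_mul', mul_assoc] at key
  exact mul_left_cancel₀ (by positivity) key
end

section
/- For all n ≥ 0, the Hankel determinant of the even-indexed Euler numbers satisfies Hₙ(E_{2k}) = ∏_{ℓ=1}^n ((2ℓ−1)²(2ℓ)²)^{n+1−ℓ}. -/
/-- Evaluation `Eₙ(x)` of the Euler polynomials, defined by the recurrence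
`Eₙ(x) = xⁿ - (1/2) ∑_{k<n} C(n,k) Eₖ(x)`, equivalent to the generating function
`2e^{xt}/(e^t+1) = ∑ Eₙ(x) tⁿ/n!`. -/
def eulerEval (x : ℚ) : ℕ → ℚ :=
  WellFounded.fix Nat.lt_wfRel.wf fun n E =>
    x ^ n - 2⁻¹ * ∑ k : Fin n, (n.choose k : ℚ) * E k k.2

/-- The Euler numbers `Eₙ = 2ⁿ Eₙ(1/2)`, with generating function `2/(e^t+e^{-t})`. -/
def eulerNumber (n : ℕ) : ℚ := 2 ^ n * eulerEval (1 / 2) n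

/-!
The exponential generating function of `Eₙ` is `sech t`. With `tanh' = 1 - tanh²` and
`sech' = -sech · tanh`, the series `Gₖ = (-1)ᵏ k! sech t · tanhᵏ t` satisfy
`Gₖ' = Gₖ₊₁ - k² Gₖ₋₁`, so `Eₙ` is the total weight of the `n`-step Dyck paths in which a down step
from height `k` weighs `-k²` (the J-fraction of `sech` with `βₖ = -k²`). Splitting a path of length
`2i + 2j` at its `2i`-th step factors the Hankel matrix `(E_{2i+2j})` as `L D Lᵀ`, with `L`
unitriangular (paths of length `2i` ending at height `2κ`) and
`D = diag(β₁ ⋯ β₂κ) = diag(∏_{ℓ ≤ κ} (2ℓ-1)²(2ℓ)²)`.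
-/

open Finset PowerSeries
open scoped Nat

section DyckPaths

variable {R : Type*} [CommSemiring R] (b : ℕ → R)

/-- The weight of all lattice paths with `m` steps `±1` from height `0` to height `k` that stay
nonnegative, a down step from height `j` weighing `b j`. -/
def dyckTable : ℕ → ℕ → R
  | 0, k => if k = 0 then 1 else 0
  | m + 1, k => (if k = 0 then 0 else dyckTable m (k - 1)) + b (k + 1) * dyckTable m (k + 1)

def dyckWeight (k : ℕ) : R := ∏ j ∈ Icc 1 k, b j

variable {b}

lemma dyckTable_eq_zero_of_lt {m k : ℕ} (h : m < k) : dyckTable b m k = 0 := by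
  induction m generalizing k with
  | zero => simp [dyckTable, Nat.pos_iff_ne_zero.mp h]
  | succ m ih => simp [dyckTable, ih (k := k - 1) (by omega), ih (k := k + 1) (by omega)]

lemma dyckTable_self (m : ℕ) : dyckTable b m m = 1 := by
  induction m with
  | zero => simp [dyckTable]
  | succ m ih => simp [dyckTable, ih, dyckTable_eq_zero_of_lt (show m < m + 2 by omega)]

lemma dyckTable_eq_zero_of_odd {m k : ℕ} (h : Odd (m + k)) : dyckTable b m k = 0 := by
  induction m generalizing k with
  | zero => simp [dyckTable, (Nat.ne_of_odd_add h).symm]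
  | succ m ih =>
    have hmk := Nat.odd_iff.1 h
    rw [dyckTable, ih (k := k + 1) (Nat.odd_iff.2 (by omega)), mul_zero, add_zero]
    split_ifs with hk
    · rfl
    · exact ih (Nat.odd_iff.2 (by omega))

lemma dyckWeight_zero : dyckWeight b 0 = 1 := by simp [dyckWeight]

lemma dyckWeight_succ (k : ℕ) : dyckWeight b (k + 1) = dyckWeight b k * b (k + 1) :=
  prod_Icc_succ_top (by omega) b

lemma eq_dyckTable_mul_dyckWeight {t : ℕ → ℕ → R}
    (h_zero : ∀ k, t 0 k = if k = 0 then 1 else 0)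
    (h_succ_zero : ∀ m, t (m + 1) 0 = t m 1)
    (h_succ_succ : ∀ m k, t (m + 1) (k + 1) = t m (k + 2) + b (k + 1) * t m k) (m k : ℕ) :
    t m k = dyckTable b m k * dyckWeight b k := by
  induction m generalizing k with
  | zero => cases k <;> simp [h_zero, dyckTable, dyckWeight_zero]
  | succ m ih =>
    cases k with
    | zero => simp [h_succ_zero, ih, dyckTable, dyckWeight_succ, dyckWeight_zero, mul_comm]
    | succ k =>
      rw [h_succ_succ, ih, ih, dyckTable, dyckWeight_succ, dyckWeight_succ]
      simp only [Nat.add_eq_zero_iff, one_ne_zero, and_false, if_false, Nat.add_sub_cancel]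
      ring

lemma sum_dyckTable_succ_mul {i N : ℕ} (hi : i ≤ N) (j : ℕ) :
    ∑ k ∈ range (N + 1), dyckTable b (i + 1) k * dyckTable b j k * dyckWeight b k
      = ∑ k ∈ range N, (dyckTable b i k * dyckTable b j (k + 1)
          + dyckTable b i (k + 1) * dyckTable b j k) * dyckWeight b (k + 1) := by
  have h_up : ∑ k ∈ range (N + 1),
      (if k = 0 then 0 else dyckTable b i (k - 1)) * dyckTable b j k * dyckWeight b k
        = ∑ k ∈ range N, dyckTable b i k * dyckTable b j (k + 1) * dyckWeight b (k + 1) := by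
    simp [sum_range_succ']
  have h_down : ∑ k ∈ range (N + 1),
      b (k + 1) * dyckTable b i (k + 1) * dyckTable b j k * dyckWeight b k
        = ∑ k ∈ range N, dyckTable b i (k + 1) * dyckTable b j k * dyckWeight b (k + 1) := by
    rw [sum_range_succ, dyckTable_eq_zero_of_lt (show i < N + 1 by omega)]
    simp only [mul_zero, zero_mul, add_zero, dyckWeight_succ]
    exact sum_congr rfl fun k _ => by ring
  simp only [dyckTable, add_mul, sum_add_distrib, h_up, h_down]

theorem sum_dyckTable_mul_dyckTable {i j N : ℕ} (h : i + j ≤ N) :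
    ∑ k ∈ range (N + 1), dyckTable b i k * dyckTable b j k * dyckWeight b k
      = dyckTable b (i + j) 0 := by
  induction i generalizing j with
  | zero =>
    rw [sum_eq_single_of_mem 0 (by simp) fun k _ hk => by simp [dyckTable, hk]]
    simp [dyckTable, dyckWeight_zero]
  | succ i ih =>
    -- the right side of `sum_dyckTable_succ_mul` is symmetric in `i` and `j`
    calc ∑ k ∈ range (N + 1), dyckTable b (i + 1) k * dyckTable b j k * dyckWeight b k
        = ∑ k ∈ range (N + 1), dyckTable b (j + 1) k * dyckTable b i k * dyckWeight b k := by
          rw [sum_dyckTable_succ_mul (by omega), sum_dyckTable_succ_mul (by omega)]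
          exact sum_congr rfl fun k _ => by ring
      _ = dyckTable b (i + 1 + j) 0 := by
          rw [show i + 1 + j = i + (j + 1) by ring, ← ih (by omega)]
          exact sum_congr rfl fun k _ => by ring

lemma dyckTable_two_mul_add_two_mul {n i : ℕ} (hi : i ≤ n) (j : ℕ) :
    dyckTable b (2 * i + 2 * j) 0 = ∑ κ ∈ range (n + 1),
      dyckTable b (2 * i) (2 * κ) * dyckTable b (2 * j) (2 * κ) * dyckWeight b (2 * κ) := by
  rw [← sum_dyckTable_mul_dyckTable (N := 2 * n + 2 * j) (by omega),
    ← sum_image (f := fun k => dyckTable b (2 * i) k * dyckTable b (2 * j) k * dyckWeight b k)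
      (g := (2 * ·)) fun _ _ _ _ h => by simpa using h]
  refine (sum_subset (fun k hk => ?_) fun k hk hk_even => ?_).symm
  · simp only [mem_image, mem_range] at hk ⊢
    omega
  · rcases Nat.even_or_odd k with ⟨κ, rfl⟩ | hk_odd
    · have : 2 * i < κ + κ := by
        by_contra!
        exact hk_even (mem_image.2 ⟨κ, mem_range.2 (by omega), by omega⟩)
      rw [dyckTable_eq_zero_of_lt this, zero_mul, zero_mul]
    · simp [dyckTable_eq_zero_of_odd (Even.add_odd (even_two_mul i) hk_odd)]

end DyckPaths

lemma eulerEval_eq (x : ℚ) (n : ℕ) :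
    eulerEval x n = x ^ n - 2⁻¹ * ∑ k ∈ range n, (n.choose k : ℚ) * eulerEval x k := by
  rw [eulerEval, WellFounded.fix_eq, ← Fin.sum_univ_eq_sum_range]

lemma eulerNumber_zero : eulerNumber 0 = 1 := by
  rw [eulerNumber, eulerEval_eq]
  simp

lemma sum_choose_mul_eulerNumber (n : ℕ) :
    ∑ k ∈ range (n + 1), (n.choose k : ℚ) * 2 ^ (n - k) * eulerNumber k + eulerNumber n = 2 := by
  have h : eulerNumber n
      = 1 - 2⁻¹ * ∑ k ∈ range n, (n.choose k : ℚ) * 2 ^ (n - k) * eulerNumber k := by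
    have hterm : ∀ k ∈ range n, (2 : ℚ) ^ n * ((n.choose k : ℚ) * eulerEval (1 / 2) k)
        = n.choose k * 2 ^ (n - k) * eulerNumber k := fun k hk => by
      rw [eulerNumber, ← pow_sub_mul_pow (2 : ℚ) (mem_range.1 hk).le]
      ring
    rw [eulerNumber, eulerEval_eq, mul_sub, ← mul_pow, mul_left_comm, mul_sum, sum_congr rfl hterm]
    norm_num
  rw [sum_range_succ, h]
  simp only [Nat.choose_self, Nat.cast_one, Nat.sub_self, pow_zero, one_mul]
  ring

lemma derivative_rescale {R : Type*} [CommSemiring R] (a : R) (f : R⟦X⟧) :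
    d⁄dX R (rescale a f) = a • rescale a (d⁄dX R f) := by
  ext n
  simp only [coeff_derivative, coeff_rescale, coeff_smul, smul_eq_mul, pow_succ]
  ring

noncomputable def eulerEGF : ℚ⟦X⟧ := mk fun n => eulerNumber n / n !

noncomputable def coshSeries : ℚ⟦X⟧ := (2 : ℚ)⁻¹ • (exp ℚ + rescale (-1) (exp ℚ))

noncomputable def sinhSeries : ℚ⟦X⟧ := (2 : ℚ)⁻¹ • (exp ℚ - rescale (-1) (exp ℚ))

lemma derivative_coshSeries : d⁄dX ℚ coshSeries = sinhSeries := by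
  rw [coshSeries, sinhSeries, Derivation.map_smul, map_add, derivative_rescale, derivative_exp]
  module

lemma derivative_sinhSeries : d⁄dX ℚ sinhSeries = coshSeries := by
  rw [coshSeries, sinhSeries, Derivation.map_smul, map_sub, derivative_rescale, derivative_exp]
  module

lemma constantCoeff_sinhSeries : constantCoeff sinhSeries = 0 := by
  rw [← coeff_zero_eq_constantCoeff_apply, sinhSeries, coeff_smul, map_sub, coeff_rescale,
    coeff_exp]
  simp

lemma constantCoeff_eulerEGF : constantCoeff eulerEGF = 1 := by
  rw [← coeff_zero_eq_constantCoeff_apply]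
  simp [eulerEGF, eulerNumber_zero]

lemma eulerEGF_mul_rescale_two_exp_add_one :
    eulerEGF * (rescale 2 (exp ℚ) + 1) = (2 : ℚ) • exp ℚ := by
  rw [mul_add_one]
  ext n
  rw [map_add, coeff_mul, Nat.sum_antidiagonal_eq_sum_range_succ_mk, coeff_smul, coeff_exp]
  have hfac : (n ! : ℚ) ≠ 0 := Nat.cast_ne_zero.2 n.factorial_ne_zero
  have hterm : ∀ k ∈ range (n + 1), coeff k eulerEGF * coeff (n - k) (rescale 2 (exp ℚ))
      = (n.choose k : ℚ) * 2 ^ (n - k) * eulerNumber k / n ! := by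
    intro k hk
    rw [eulerEGF, coeff_mk, coeff_rescale, coeff_exp, Algebra.algebraMap_self_apply,
      Nat.cast_choose ℚ (mem_range_succ_iff.1 hk)]
    have : ((n - k)! : ℚ) ≠ 0 := Nat.cast_ne_zero.2 (n - k).factorial_ne_zero
    field_simp
  rw [sum_congr rfl hterm, eulerEGF, coeff_mk, ← sum_div, ← add_div, sum_choose_mul_eulerNumber,
    Algebra.algebraMap_self_apply, smul_eq_mul, mul_one_div]

lemma eulerEGF_mul_coshSeries : eulerEGF * coshSeries = 1 := by
  have hcosh : coshSeries = (2 : ℚ)⁻¹ • ((rescale 2 (exp ℚ) + 1) * rescale (-1) (exp ℚ)) := by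
    rw [add_one_mul, exp_mul_exp_eq_exp_add, coshSeries]
    norm_num [rescale_one]
  rw [hcosh, mul_smul_comm, ← mul_assoc, eulerEGF_mul_rescale_two_exp_add_one, smul_mul_assoc,
    smul_smul, inv_mul_cancel₀ two_ne_zero, one_smul]
  exact exp_mul_exp_neg_eq_one

noncomputable def tanhSeries : ℚ⟦X⟧ := eulerEGF * sinhSeries

lemma derivative_eulerEGF : d⁄dX ℚ eulerEGF = -(eulerEGF * tanhSeries) := by
  have hprod : coshSeries * d⁄dX ℚ eulerEGF + eulerEGF * sinhSeries = 0 := by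
    simpa [Derivation.leibniz, derivative_coshSeries, eulerEGF_mul_coshSeries, add_comm, mul_comm]
      using congrArg (d⁄dX ℚ) eulerEGF_mul_coshSeries
  calc d⁄dX ℚ eulerEGF = eulerEGF * (coshSeries * d⁄dX ℚ eulerEGF) := by
        rw [← mul_assoc, eulerEGF_mul_coshSeries, one_mul]
    _ = -(eulerEGF * tanhSeries) := by
        rw [eq_neg_of_add_eq_zero_left hprod, tanhSeries]
        ring

lemma derivative_tanhSeries : d⁄dX ℚ tanhSeries = 1 - tanhSeries ^ 2 := by
  rw [tanhSeries, Derivation.leibniz, derivative_sinhSeries, derivative_eulerEGF, smul_eq_mul,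
    smul_eq_mul, eulerEGF_mul_coshSeries, tanhSeries]
  ring

-- The series `Gₖ` of the header.
noncomputable def sechTanhPow (k : ℕ) : ℚ⟦X⟧ :=
  ((-1 : ℚ) ^ k * k !) • (eulerEGF * tanhSeries ^ k)

lemma derivative_sechTanhPow_zero : d⁄dX ℚ (sechTanhPow 0) = sechTanhPow 1 := by
  simp [sechTanhPow, derivative_eulerEGF]

lemma derivative_sechTanhPow_succ (k : ℕ) :
    d⁄dX ℚ (sechTanhPow (k + 1)) = sechTanhPow (k + 2) - ((k + 1 : ℚ) ^ 2) • sechTanhPow k := by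
  have h : d⁄dX ℚ (eulerEGF * tanhSeries ^ (k + 1))
      = (k + 1 : ℚ) • (eulerEGF * tanhSeries ^ k)
        - (k + 2 : ℚ) • (eulerEGF * tanhSeries ^ (k + 2)) := by
    rw [Derivation.leibniz, Derivation.leibniz_pow, derivative_tanhSeries, derivative_eulerEGF]
    simp only [smul_eq_mul, nsmul_eq_mul, smul_eq_C_mul, map_add, map_natCast, map_one,
      map_ofNat, Nat.add_sub_cancel, Nat.cast_add, Nat.cast_one]
    ring
  simp only [sechTanhPow, Derivation.map_smul, h, Nat.factorial_succ, Nat.cast_mul, Nat.cast_succ]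
  module

lemma factorial_mul_coeff_succ (m : ℕ) (f : ℚ⟦X⟧) :
    ((m + 1)! : ℚ) * coeff (m + 1) f = m ! * coeff m (d⁄dX ℚ f) := by
  rw [coeff_derivative, Nat.factorial_succ]
  push_cast
  ring

theorem eulerNumber_eq_dyckTable (m : ℕ) :
    eulerNumber m = dyckTable (fun k => -(k : ℚ) ^ 2) m 0 := by
  set t : ℕ → ℕ → ℚ := fun m k => m ! * coeff m (sechTanhPow k)
  have ht : ∀ m k,
      t m k = dyckTable (fun k => -(k : ℚ) ^ 2) m k * dyckWeight (fun k => -(k : ℚ) ^ 2) k := by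
    refine eq_dyckTable_mul_dyckWeight (fun k => ?_) (fun m => ?_) (fun m k => ?_)
    · cases k <;> simp [t, sechTanhPow, coeff_zero_eq_constantCoeff_apply, constantCoeff_eulerEGF,
        tanhSeries, constantCoeff_sinhSeries]
    · simp only [t, factorial_mul_coeff_succ, derivative_sechTanhPow_zero]
    · simp only [t, factorial_mul_coeff_succ, derivative_sechTanhPow_succ, map_sub, coeff_smul,
        smul_eq_mul]
      push_cast
      ring
  have hfac : (m ! : ℚ) ≠ 0 := Nat.cast_ne_zero.2 m.factorial_ne_zero
  calc eulerNumber m = t m 0 := by simp [t, sechTanhPow, eulerEGF, mul_div_cancel₀ _ hfac]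
    _ = _ := by rw [ht, dyckWeight_zero, mul_one]

theorem hankel_dyckTable_even (b : ℕ → ℚ) (n : ℕ) :
    hankel (fun k => dyckTable b (2 * k) 0) n = ∏ κ ∈ range (n + 1), dyckWeight b (2 * κ) := by
  set L : Matrix (Fin (n + 1)) (Fin (n + 1)) ℚ := Matrix.of fun i κ => dyckTable b (2 * i) (2 * κ)
  have hL : L.det = 1 := by
    rw [Matrix.det_of_isLowerTriangular L fun i κ h =>
      dyckTable_eq_zero_of_lt (by simp at h; omega)]
    exact prod_eq_one fun κ _ => dyckTable_self _
  have hfactor : Matrix.of (fun i j : Fin (n + 1) => dyckTable b (2 * (i + j : ℕ)) 0)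
      = L * Matrix.diagonal (fun κ : Fin (n + 1) => dyckWeight b (2 * κ)) * L.transpose := by
    ext i j
    rw [Matrix.mul_apply]
    simp only [Matrix.of_apply, Matrix.mul_diagonal, Matrix.transpose_apply, L, mul_add,
      dyckTable_two_mul_add_two_mul i.is_le, ← Fin.sum_univ_eq_sum_range
        (fun κ => dyckTable b (2 * i) (2 * κ) * dyckTable b (2 * j) (2 * κ) * dyckWeight b (2 * κ))]
    exact sum_congr rfl fun κ _ => by ring
  rw [hankel, hfactor, Matrix.det_mul, Matrix.det_mul, Matrix.det_transpose, hL,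
    Matrix.det_diagonal, Fin.prod_univ_eq_prod_range (fun κ => dyckWeight b (2 * κ)), one_mul,
    mul_one]

lemma dyckWeight_neg_sq_two_mul (κ : ℕ) :
    dyckWeight (fun k => -(k : ℚ) ^ 2) (2 * κ)
      = ∏ ℓ ∈ Icc 1 κ, ((2 * (ℓ : ℚ) - 1) ^ 2 * (2 * (ℓ : ℚ)) ^ 2) := by
  induction κ with
  | zero => simp [dyckWeight_zero]
  | succ κ ih =>
    rw [show 2 * (κ + 1) = 2 * κ + 1 + 1 by ring, dyckWeight_succ, dyckWeight_succ, ih,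
      prod_Icc_succ_top (by omega)]
    push_cast
    ring

lemma prod_range_prod_Icc {M : Type*} [CommMonoid M] (f : ℕ → M) (n : ℕ) :
    ∏ κ ∈ range (n + 1), ∏ ℓ ∈ Icc 1 κ, f ℓ = ∏ ℓ ∈ Icc 1 n, f ℓ ^ (n + 1 - ℓ) := by
  rw [prod_comm' (t' := Icc 1 n) (s' := fun ℓ => Icc ℓ n) fun κ ℓ => by
    simp only [mem_range, mem_Icc]
    omega]
  exact prod_congr rfl fun ℓ _ => by rw [prod_const, Nat.card_Icc]

theorem hankel_even_eulerNumber (n : ℕ) :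
    hankel (fun k => eulerNumber (2 * k)) n
      = ∏ ℓ ∈ Finset.Icc 1 n, ((2 * (ℓ : ℚ) - 1) ^ 2 * (2 * (ℓ : ℚ)) ^ 2) ^ (n + 1 - ℓ) := by
  simp only [eulerNumber_eq_dyckTable, hankel_dyckTable_even, ← prod_range_prod_Icc,
    dyckWeight_neg_sq_two_mul]
end
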